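/- arXiv:1612.05959 — 5 statements merged into one kernel-verified Lean document; each statement's English description precedes it below -/
import Mathlib

section
/- Let G be a finite solvable group, p an odd prime, and E a normal subgroup of G which is an extraspecial p-group of order p^{2n+1} with center Z = Z(E). Suppose α ∈ G \ E has order 2 and C_Z(α) = 1, i.e., no nontrivial element of Z commutes with α. Then the number of elements of order 2 in the coset αE is at most p^{n+1}. -/
/-!
Let `σ` be conjugation by `α` on `E`. Since `α² = 1`, an element `α e` with `e ∈ E` is an
involution exactly when `σ e = e⁻¹`, so it suffices to bound the set of elements of `E` inverted
by `σ`. As `E` has class two, `⁅x⁻¹, y⁻¹⁆ = ⁅x, y⁆`; hence for two inverted elements the central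
commutator `⁅x, y⁆` is fixed by `σ`, so it is trivial and the inverted elements commute.
Finally every abelian subgroup `H` of `E` has `|H|² ≤ |Z| |E| = p^(2n+2)`: the commutator pairing
embeds `H / (H ∩ Z)` into the dual `Hom(E / C_E(H), Z)`, which has at most `|E : C_E(H)|`
elements since `Z` is cyclic, while `H ≤ C_E(H)`.
-/

open Subgroup
open scoped commutatorElement IsMulCommutative

theorem card_monoidHom_le_of_isCyclic (A M : Type*) [CommGroup A] [Finite A] [Group M]
    [Finite M] [IsCyclic M] : Nat.card (A →* M) ≤ Nat.card A := by
  have : NeZero (Nat.card M) := ⟨Nat.card_pos.ne'⟩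
  let e : M ≃* rootsOfUnity (Nat.card M) ℂ :=
    mulEquivOfCyclicCardEq (Complex.card_rootsOfUnity _).symm
  let ι : M →* ℂˣ := (rootsOfUnity (Nat.card M) ℂ).subtype.comp e.toMonoidHom
  have hι : Function.Injective ι := Subtype.val_injective.comp e.injective
  calc Nat.card (A →* M) ≤ Nat.card (A →* ℂˣ) :=
        Nat.card_le_card_of_injective ι.comp fun f g h ↦ by
          ext a; exact hι (DFunLike.congr_fun h a)
    _ = Nat.card A := CommGroup.card_monoidHom_of_hasEnoughRootsOfUnity A ℂ

section ClassTwo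

variable {E : Type*} [Group E]

theorem commutatorElement_mul_right_of_mem_center {a c : E} (h : ⁅a, c⁆ ∈ center E) (b : E) :
    ⁅a, b * c⁆ = ⁅a, b⁆ * ⁅a, c⁆ := by
  rw [commutatorElement_mul_right_eq_mul_conj, mul_assoc _ b, mem_center_iff.mp h b]
  group

theorem commutatorElement_mul_left_of_mem_center {b c : E} (h : ⁅b, c⁆ ∈ center E) (a : E) :
    ⁅a * b, c⁆ = ⁅b, c⁆ * ⁅a, c⁆ := by
  rw [commutatorElement_mul_left_eq_conj_mul, mem_center_iff.mp h a]
  group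

def commutatorPairing (hE : ∀ x y : E, ⁅x, y⁆ ∈ center E) : E →* E →* center E :=
  MonoidHom.mk' (fun a ↦ MonoidHom.mk' (fun b ↦ ⟨⁅a, b⁆, hE a b⟩) fun b c ↦
      Subtype.ext (commutatorElement_mul_right_of_mem_center (hE a c) b))
    fun a b ↦ MonoidHom.ext fun c ↦ Subtype.ext <| by
      simp only [MonoidHom.mk'_apply, MonoidHom.mul_apply, Subgroup.coe_mul]
      rw [commutatorElement_mul_left_of_mem_center (hE b c) a]
      exact (mem_center_iff.mp (hE b c) _).symm

@[simp]
theorem commutatorPairing_apply (hE : ∀ x y : E, ⁅x, y⁆ ∈ center E) (a b : E) :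
    (commutatorPairing hE a b : E) = ⁅a, b⁆ := rfl

theorem commutatorPairing_eq_one_iff (hE : ∀ x y : E, ⁅x, y⁆ ∈ center E) (a b : E) :
    commutatorPairing hE a b = 1 ↔ a * b = b * a := by
  rw [← Subtype.coe_inj, commutatorPairing_apply, OneMemClass.coe_one,
    commutatorElement_eq_one_iff_mul_comm]

theorem commutatorElement_inv_inv_of_mem_center (hE : ∀ x y : E, ⁅x, y⁆ ∈ center E) (a b : E) :
    ⁅a⁻¹, b⁻¹⁆ = ⁅a, b⁆ := by
  simp only [← commutatorPairing_apply hE, map_inv, MonoidHom.inv_apply, inv_inv]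

theorem card_le_card_center_mul_index_centralizer (hE : ∀ x y : E, ⁅x, y⁆ ∈ center E)
    [Finite E] [IsCyclic (center E)] (H : Subgroup E) :
    Nat.card H ≤ Nat.card (center E) * (centralizer (H : Set E)).index := by
  -- `E / C_E(H)` enters as the range of `β`, and `H` acts on it by evaluation.
  let β : E →* H →* center E := (MonoidHom.compHom' H.subtype).comp (commutatorPairing hE)
  let ev : H →* β.range →* center E := (MonoidHom.compHom' β.range.subtype).comp MonoidHom.eval
  have hβ : β.ker = centralizer H := by
    ext e
    simp only [MonoidHom.mem_ker, MonoidHom.ext_iff, Subtype.forall, mem_centralizer_iff]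
    exact forall₂_congr fun h _ ↦ (commutatorPairing_eq_one_iff hE e h).trans eq_comm
  have hev : ∀ h ∈ ev.ker, (h : E) ∈ center E := by
    intro h hh
    refine mem_center_iff.mpr fun e ↦ (commutatorPairing_eq_one_iff hE e h).mp ?_
    exact DFunLike.congr_fun hh ⟨β e, e, rfl⟩
  have : Finite (H →* center E) := .of_injective _ DFunLike.coe_injective
  have : Finite (β.range →* center E) := .of_injective _ DFunLike.coe_injective
  calc Nat.card H = Nat.card ev.ker * Nat.card ev.range := by
        rw [← ev.ker.card_mul_index, index_ker ev]
    _ ≤ Nat.card (center E) * Nat.card (β.range →* center E) := by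
        gcongr
        · exact Nat.card_le_card_of_injective (fun h ↦ ⟨h.1.1, hev h.1 h.2⟩)
            fun _ _ hh ↦ by ext; simpa using congrArg Subtype.val hh
        · exact card_le_card_group _
    _ ≤ Nat.card (center E) * Nat.card β.range := by
        gcongr; exact card_monoidHom_le_of_isCyclic _ _
    _ = Nat.card (center E) * (centralizer (H : Set E)).index := by
        rw [← hβ, index_ker β]

theorem card_sq_le_of_le_centralizer (hE : ∀ x y : E, ⁅x, y⁆ ∈ center E) [Finite E]
    [IsCyclic (center E)] {H : Subgroup E} (hH : H ≤ centralizer H) :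
    Nat.card H ^ 2 ≤ Nat.card (center E) * Nat.card E := by
  calc Nat.card H ^ 2 = Nat.card H * Nat.card H := sq _
    _ ≤ Nat.card (center E) * (centralizer (H : Set E)).index *
          Nat.card (centralizer (H : Set E)) :=
        Nat.mul_le_mul (card_le_card_center_mul_index_centralizer hE H) (card_le_of_le hH)
    _ = Nat.card (center E) * Nat.card E := by
        rw [mul_assoc, mul_comm (index _), card_mul_index]

theorem card_sq_le_of_pairwise_commute (hE : ∀ x y : E, ⁅x, y⁆ ∈ center E) [Finite E]
    [IsCyclic (center E)] {S : Set E} (hS : ∀ x ∈ S, ∀ y ∈ S, x * y = y * x) :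
    Nat.card S ^ 2 ≤ Nat.card (center E) * Nat.card E := by
  have := isMulCommutative_closure hS
  refine le_trans ?_ (card_sq_le_of_le_centralizer hE (le_centralizer (closure S)))
  gcongr
  exact Nat.card_mono (Set.toFinite _) subset_closure

theorem mul_comm_of_map_eq_inv (hE : ∀ x y : E, ⁅x, y⁆ ∈ center E) (σ : E →* E)
    (hσ : ∀ z ∈ center E, σ z = z → z = 1) {x y : E} (hx : σ x = x⁻¹) (hy : σ y = y⁻¹) :
    x * y = y * x := by
  refine commutatorElement_eq_one_iff_mul_comm.mp (hσ _ (hE x y) ?_)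
  rw [map_commutatorElement, hx, hy, commutatorElement_inv_inv_of_mem_center hE]

end ClassTwo

theorem MulAut.conjNormal_inv_mul_eq_inv {G : Type*} [Group G] {E : Subgroup G} [E.Normal]
    {α x : G} (hα : orderOf α = 2) (hx : orderOf x = 2) (hxE : α⁻¹ * x ∈ E) :
    MulAut.conjNormal α ⟨α⁻¹ * x, hxE⟩ = (⟨α⁻¹ * x, hxE⟩ : E)⁻¹ := by
  ext
  simp only [MulAut.conjNormal_apply, InvMemClass.coe_inv, mul_inv_rev, inv_inv,
    mul_inv_cancel_left]
  rw [inv_eq_self_of_orderOf_eq_two hα, inv_eq_self_of_orderOf_eq_two hx]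

theorem stmt0_general (G : Type*) [Group G] [Fintype G]
    (p n : ℕ) (hp : p.Prime)
    (E : Subgroup G) (hEnormal : E.Normal)
    (hcardE : Nat.card E = p ^ (2 * n + 1))
    (hcenter : Nat.card (Subgroup.center E) = p)
    (hcomm : commutator E = Subgroup.center E)
    (α : G) (hα2 : orderOf α = 2)
    (hCZ : ∀ z ∈ (Subgroup.center E).map E.subtype, z ≠ 1 → α * z ≠ z * α) :
    Nat.card {x : G | orderOf x = 2 ∧ α⁻¹ * x ∈ E} ≤ p ^ (n + 1) := by
  have : Fact p.Prime := ⟨hp⟩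
  have : IsCyclic (center E) := isCyclic_of_prime_card hcenter
  let σ : E →* E := (MulAut.conjNormal α).toMonoidHom
  have hE : ∀ x y : E, ⁅x, y⁆ ∈ center E := fun x y ↦
    hcomm ▸ commutator_mem_commutator (mem_top x) (mem_top y)
  have hσ : ∀ z ∈ center E, σ z = z → z = 1 := by
    intro z hz hσz
    by_contra hne
    refine hCZ z ⟨z, hz, rfl⟩ (by simpa using hne) ?_
    have := congrArg Subtype.val hσz
    simp only [σ, MulEquiv.coe_toMonoidHom, MulAut.conjNormal_apply] at this
    exact mul_inv_eq_iff_eq_mul.mp this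
  let S : Set E := {e | σ e = e⁻¹}
  have hS : Nat.card S ^ 2 ≤ (p ^ (n + 1)) ^ 2 := by
    calc Nat.card S ^ 2 ≤ Nat.card (center E) * Nat.card E :=
          card_sq_le_of_pairwise_commute hE fun x hx y hy ↦ mul_comm_of_map_eq_inv hE σ hσ hx hy
      _ = (p ^ (n + 1)) ^ 2 := by rw [hcenter, hcardE]; ring
  refine le_trans ?_ ((Nat.pow_le_pow_iff_left two_ne_zero).mp hS)
  refine Nat.card_le_card_of_injective
    (fun x ↦ ⟨⟨α⁻¹ * x, x.2.2⟩, MulAut.conjNormal_inv_mul_eq_inv hα2 x.2.1 x.2.2⟩) ?_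
  intro x y hxy
  exact Subtype.ext (mul_left_cancel (congrArg Subtype.val (congrArg Subtype.val hxy)))

/-- Let `G` be a finite solvable group, `p` an odd prime, and `E` a normal
subgroup of `G` which is an extraspecial `p`-group of order `p^(2n+1)` (its center `Z` has
order `p`, its commutator subgroup equals its center, and the quotient by the center is
elementary abelian).  If `α ∈ G \ E` has order `2` and no nontrivial element of `Z` commutes
with `α`, then the number of elements of order `2` in the coset `αE` is at most `p^(n+1)`. -/
theorem stmt0 (G : Type*) [Group G] [Fintype G] (hsolv : IsSolvable G)
    (p n : ℕ) (hp : p.Prime) (hodd : Odd p)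
    (E : Subgroup G) (hEnormal : E.Normal)
    (hcardE : Nat.card E = p ^ (2 * n + 1))
    (hcenter : Nat.card (Subgroup.center E) = p)
    (hcomm : commutator E = Subgroup.center E)
    (helem : ∀ x : E, x ^ p ∈ Subgroup.center E)
    (α : G) (hαE : α ∉ E) (hα2 : orderOf α = 2)
    (hCZ : ∀ z ∈ (Subgroup.center E).map E.subtype, z ≠ 1 → α * z ≠ z * α) :
    Nat.card {x : G | orderOf x = 2 ∧ α⁻¹ * x ∈ E} ≤ p ^ (n + 1) :=
  stmt0_general G p n hp E hEnormal hcardE hcenter hcomm α hα2 hCZ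
end

section
/- Let G be a finite solvable group and U a normal cyclic subgroup of G. Let q be a prime power, n ≥ 1 an integer, F a finite field with q^{2n} elements, and φ : U → Fˣ an injective group homomorphism. Suppose α ∈ G \ U has order 2 and for every u ∈ U one has φ(α u α⁻¹) = φ(u)^{q^n}. Then the number of elements of order 2 in the coset αU is at most q^n + 1. -/
/-!
Write an element of the coset `αU` as `x = α * u`. Since `α² = 1`, `x² = 1` says exactly that
conjugation by `α` inverts `u`, which under `φ` becomes `φ u ^ (q^n) = (φ u)⁻¹`, i.e.
`φ u ^ (q^n + 1) = 1`. So `x ↦ φ (α⁻¹ * x)` embeds the involutions of `αU` into the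
`(q^n + 1)`-th roots of unity of `F`, of which there are at most `q^n + 1`.
-/

theorem conj_eq_inv_of_sq_eq_one_of_mul_sq_eq_one {G : Type*} [Group G] {a u : G}
    (ha : a ^ 2 = 1) (hau : (a * u) ^ 2 = 1) : a * u * a⁻¹ = u⁻¹ := by
  have ha_inv : a⁻¹ = a := inv_eq_of_mul_eq_one_left (by rwa [← pow_two])
  rw [ha_inv, ← mul_inv_eq_one, inv_inv, mul_assoc (a * u), ← pow_two]
  exact hau

section CosetInvolutions

variable {G : Type*} [Group G] {U : Subgroup G} (hU : U.Normal) {α : G} {k : ℕ}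

include hU in
theorem pow_succ_eq_one_of_mul_sq_eq_one {H : Type*} [Group H] {φ : U →* H}
    (hact : ∀ u : U, φ ⟨α * u * α⁻¹, hU.conj_mem u.1 u.2 α⟩ = φ u ^ k)
    (hα : α ^ 2 = 1) {u : U} (hu : (α * u) ^ 2 = 1) : φ u ^ (k + 1) = 1 := by
  have hconj : (⟨α * u * α⁻¹, hU.conj_mem u.1 u.2 α⟩ : U) = u⁻¹ :=
    Subtype.ext (conj_eq_inv_of_sq_eq_one_of_mul_sq_eq_one hα hu)
  have h := hact u
  rw [hconj, map_inv] at h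
  rw [pow_succ, ← h, inv_mul_cancel]

include hU in
theorem card_involutions_mul_coset_le {K : Type*} [CommRing K] [IsDomain K] {φ : U →* Kˣ}
    (hφ : Function.Injective φ) (hα : α ^ 2 = 1)
    (hact : ∀ u : U, φ ⟨α * u * α⁻¹, hU.conj_mem u.1 u.2 α⟩ = φ u ^ k) :
    Nat.card {x : G | orderOf x = 2 ∧ α⁻¹ * x ∈ U} ≤ k + 1 := by
  let f : {x : G | orderOf x = 2 ∧ α⁻¹ * x ∈ U} → rootsOfUnity (k + 1) K := fun x =>
    ⟨φ ⟨α⁻¹ * x, x.2.2⟩, (mem_rootsOfUnity _ _).2 <|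
      pow_succ_eq_one_of_mul_sq_eq_one hU hact hα
        (by rw [mul_inv_cancel_left]; exact (orderOf_eq_prime_iff.mp x.2.1).1)⟩
  have hf : Function.Injective f := fun x y hxy =>
    Subtype.ext <| mul_left_cancel <| congrArg Subtype.val <| hφ <| congrArg Subtype.val hxy
  exact (Nat.card_le_card_of_injective f hf).trans (card_rootsOfUnity _ _)

end CosetInvolutions

theorem stmt1_general (G : Type*) [Group G]
    (U : Subgroup G) (hUnormal : U.Normal)
    (q n : ℕ)
    (F : Type*) [Field F]
    (φ : U →* Fˣ) (hφ : Function.Injective φ)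
    (α : G) (hα2 : orderOf α = 2)
    (hact : ∀ u : U, φ ⟨α * u * α⁻¹, hUnormal.conj_mem u.1 u.2 α⟩ = φ u ^ q ^ n) :
    Nat.card {x : G | orderOf x = 2 ∧ α⁻¹ * x ∈ U} ≤ q ^ n + 1 :=
  card_involutions_mul_coset_le hUnormal hφ (orderOf_eq_prime_iff.mp hα2).1 hact

/-- Let `G` be a finite solvable group and `U` a normal cyclic subgroup of `G`.
Let `q` be a prime power, `n ≥ 1`, `F` a finite field with `q^(2n)` elements, and
`φ : U → Fˣ` an injective group homomorphism.  Suppose `α ∈ G \ U` has order `2` and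
conjugation by `α` corresponds under `φ` to the Frobenius `x ↦ x^(q^n)`.  Then the number of
elements of order `2` in the coset `αU` is at most `q^n + 1`. -/
theorem stmt1 (G : Type*) [Group G] [Fintype G] (hsolv : IsSolvable G)
    (U : Subgroup G) (hUnormal : U.Normal) (hUcyclic : IsCyclic U)
    (q n : ℕ) (hq : IsPrimePow q) (hn : 1 ≤ n)
    (F : Type*) [Field F] [Fintype F] (hF : Fintype.card F = q ^ (2 * n))
    (φ : U →* Fˣ) (hφ : Function.Injective φ)
    (α : G) (hαU : α ∉ U) (hα2 : orderOf α = 2)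
    (hact : ∀ u : U, φ ⟨α * u * α⁻¹, hUnormal.conj_mem u.1 u.2 α⟩ = φ u ^ q ^ n) :
    Nat.card {x : G | orderOf x = 2 ∧ α⁻¹ * x ∈ U} ≤ q ^ n + 1 :=
  stmt1_general G U hUnormal q n F φ hφ α hα2 hact
end

section
/- Let G be a finite solvable group and U a normal cyclic subgroup of G. Let s be a prime, q a prime power, n ≥ 1 an integer, F a finite field with q^{sn} elements, and φ : U → Fˣ an injective group homomorphism. Suppose α ∈ G \ U has order s and for every u ∈ U one has φ(α u α⁻¹) = φ(u)^{q^n}. Then the number of elements of order s in the coset αU is at most (q^{sn} − 1)/(q^n − 1). -/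
/-- Let `G` be a finite solvable group and `U` a normal cyclic subgroup of `G`.
Let `s` be a prime, `q` a prime power, `n ≥ 1`, `F` a finite field with `q^(s*n)` elements, and
`φ : U → Fˣ` an injective group homomorphism.  Suppose `α ∈ G \ U` has order `s` and
conjugation by `α` corresponds under `φ` to the Frobenius `x ↦ x^(q^n)`.  Then the number of
elements of order `s` in the coset `αU` is at most `(q^(s*n) - 1) / (q^n - 1)`. -/
theorem stmt2 (G : Type*) [Group G] [Fintype G] (hsolv : IsSolvable G)
    (U : Subgroup G) (hUnormal : U.Normal) (hUcyclic : IsCyclic U)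
    (s : ℕ) (hs : s.Prime) (q n : ℕ) (hq : IsPrimePow q) (hn : 1 ≤ n)
    (F : Type*) [Field F] [Fintype F] (hF : Fintype.card F = q ^ (s * n))
    (φ : U →* Fˣ) (hφ : Function.Injective φ)
    (α : G) (hαU : α ∉ U) (hαs : orderOf α = s)
    (hact : ∀ u : U, φ ⟨α * u * α⁻¹, hUnormal.conj_mem u.1 u.2 α⟩ = φ u ^ q ^ n) :
    Nat.card {x : G | orderOf x = s ∧ α⁻¹ * x ∈ U} ≤ (q ^ (s * n) - 1) / (q ^ n - 1) := by
  classical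
  have hq2 : 2 ≤ q := hq.two_le
  have hqn2 : 2 ≤ q ^ n :=
    le_trans hq2 (Nat.le_self_pow (by omega) q)
  set m : ℕ := ∑ i ∈ Finset.range s, (q ^ n) ^ i with hm
  have hmpos : 0 < m := by
    have : 0 < s := hs.pos
    have : (q ^ n) ^ 0 ≤ m := by
      apply Finset.single_le_sum (f := fun i => (q ^ n) ^ i)
      · intro i _; positivity
      · simpa using hs.pos
    simpa using lt_of_lt_of_le one_pos (by simpa using this)
  -- rewrite the RHS as the geometric sum m
  have hrhs : (q ^ (s * n) - 1) / (q ^ n - 1) = m := by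
    rw [hm, Nat.geomSum_eq hqn2, ← pow_mul, mul_comm n s]
  rw [hrhs]
  -- key computation: powers of α * u
  have key : ∀ (u : U) (k : ℕ), ∃ w : U,
      (α * (u : G)) ^ k = (w : G) * α ^ k ∧
      φ w = φ u ^ (∑ i ∈ Finset.range k, (q ^ n) ^ (i + 1)) := by
    intro u k
    induction k with
    | zero => exact ⟨1, by simp, by simp⟩
    | succ k ih =>
      obtain ⟨w, hw1, hw2⟩ := ih
      refine ⟨⟨α * ((u * w : U) : G) * α⁻¹, hUnormal.conj_mem _ (u * w).2 α⟩, ?_, ?_⟩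
      · rw [pow_succ']
        rw [hw1]
        push_cast
        group
      · rw [hact (u * w)]
        rw [map_mul, hw2, ← pow_succ', ← pow_mul]
        congr 1
        rw [Finset.sum_range_succ', add_mul, one_mul, Finset.sum_mul]
        simp [pow_succ, mul_comm, mul_assoc, mul_left_comm]
  -- for every x in the set, φ(α⁻¹x)^m = 1
  have hmem : ∀ x : {x : G | orderOf x = s ∧ α⁻¹ * x ∈ U},
      (φ ⟨α⁻¹ * (x : G), x.2.2⟩) ^ m = 1 := by
    rintro ⟨x, hxs, hxU⟩
    set u : U := ⟨α⁻¹ * x, hxU⟩ with hu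
    have hx : x = α * (u : G) := by simp [hu]
    obtain ⟨w, hw1, hw2⟩ := key u s
    have hαs1 : α ^ s = 1 := by rw [← hαs]; exact pow_orderOf_eq_one α
    have hxs1 : x ^ s = 1 := by rw [← hxs]; exact pow_orderOf_eq_one x
    have hw0 : (w : G) = 1 := by
      have := hw1
      rw [← hx, hxs1, hαs1, mul_one] at this
      exact this.symm
    have hwone : w = 1 := Subtype.ext hw0
    have hφ1 : φ u ^ (∑ i ∈ Finset.range s, (q ^ n) ^ (i + 1)) = 1 := by
      rw [← hw2, hwone, map_one]
    -- the exponent equals q^n * m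
    have hexp : (∑ i ∈ Finset.range s, (q ^ n) ^ (i + 1)) = q ^ n * m := by
      rw [hm, Finset.mul_sum]
      apply Finset.sum_congr rfl
      intro i _
      rw [← pow_succ']
    rw [hexp, mul_comm, pow_mul] at hφ1
    -- (φ u ^ m) ^ (q ^ n) = 1 and orderOf divides card Fˣ = q^(sn) - 1, coprime to q^n
    have hdvd1 : orderOf (φ u ^ m) ∣ q ^ n := orderOf_dvd_of_pow_eq_one hφ1
    have hdvd2 : orderOf (φ u ^ m) ∣ q ^ (s * n) - 1 := by
      have : orderOf (φ u ^ m) ∣ Fintype.card Fˣ := orderOf_dvd_card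
      rwa [Fintype.card_units, hF] at this
    have hcop : Nat.Coprime (q ^ n) (q ^ (s * n) - 1) := by
      have h1 : Nat.Coprime (q ^ (s * n)) (q ^ (s * n) - 1) := by
        have hpos : 1 ≤ q ^ (s * n) := Nat.one_le_pow _ _ (by omega)
        have hd1 : Nat.gcd (q ^ (s * n)) (q ^ (s * n) - 1) ∣ q ^ (s * n) :=
          Nat.gcd_dvd_left _ _
        have hd2 : Nat.gcd (q ^ (s * n)) (q ^ (s * n) - 1) ∣ q ^ (s * n) - 1 :=
          Nat.gcd_dvd_right _ _
        have : Nat.gcd (q ^ (s * n)) (q ^ (s * n) - 1) ∣ 1 := by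
          have := Nat.dvd_sub hd1 hd2
          rwa [Nat.sub_sub_self hpos] at this
        exact Nat.dvd_one.mp this
      exact Nat.Coprime.coprime_dvd_left
        (pow_dvd_pow q (by nlinarith [hs.two_le])) h1
    have hord : orderOf (φ u ^ m) = 1 := by
      have := Nat.dvd_gcd hdvd1 hdvd2
      rw [hcop.gcd_eq_one] at this
      exact Nat.dvd_one.mp this
    exact orderOf_eq_one_iff.mp hord
  -- build an injection into the m-th roots of unity in Fˣ
  let f : {x : G | orderOf x = s ∧ α⁻¹ * x ∈ U} → {y : Fˣ // y ^ m = 1} :=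
    fun x => ⟨φ ⟨α⁻¹ * (x : G), x.2.2⟩, hmem x⟩
  have hf : Function.Injective f := by
    rintro ⟨x, hx⟩ ⟨y, hy⟩ hxy
    have := hφ (Subtype.ext_iff.mp hxy)
    have hxy2 : α⁻¹ * x = α⁻¹ * y := Subtype.ext_iff.mp this
    exact Subtype.ext (by exact mul_left_cancel hxy2)
  calc Nat.card {x : G | orderOf x = s ∧ α⁻¹ * x ∈ U}
      ≤ Nat.card {y : Fˣ // y ^ m = 1} := Nat.card_le_card_of_injective f hf
    _ ≤ m := by
        rw [Nat.card_eq_fintype_card, Fintype.card_subtype]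
        exact IsCyclic.card_pow_eq_one_le hmpos
end

section
/- Let G be a finite group and K a normal subgroup of G isomorphic to SL(2,3), the group of 2×2 matrices of determinant 1 over the field with 3 elements. Suppose α ∈ G \ K has order 2. Then the number of elements of order 2 in the coset αK is at most 12. -/
/-!
Writing `x = α k`, the condition `x² = 1` becomes `α k α⁻¹ = k⁻¹`, and `x ≠ 1` is automatic
as `α ∉ K`; so the involutions of `αK` correspond to the elements of `K ≅ SL(2,3)` inverted by
an automorphism. An endomorphism `f` of `SL(2,3)` is determined by the images `u`, `v` of the
two elementary transvections, and checking all candidates `(u, v)` shows that `f` inverts at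
most `12` elements.
-/

open Finset

theorem mul_sq_eq_one_iff_conj_eq_inv {G : Type*} [Group G] {α k : G} (hα : α ^ 2 = 1) :
    (α * k) ^ 2 = 1 ↔ α * k * α⁻¹ = k⁻¹ := by
  rw [inv_eq_of_mul_eq_one_right (pow_two α ▸ hα), pow_two, ← mul_assoc, mul_eq_one_iff_eq_inv]

theorem Subgroup.card_orderOf_eq_two_coset {G : Type*} [Group G] {K : Subgroup G} [K.Normal]
    {α : G} (hα : α ^ 2 = 1) (hαK : α ∉ K) :
    Nat.card {x : G | orderOf x = 2 ∧ α⁻¹ * x ∈ K} =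
      Nat.card {k : K // MulAut.conjNormal α k = k⁻¹} := by
  have ne_one {x : G} (hx : α⁻¹ * x ∈ K) : x ≠ 1 := by
    rintro rfl
    exact hαK (by simpa using hx)
  refine Nat.card_congr
    { toFun := fun x => ⟨⟨α⁻¹ * x, x.2.2⟩, Subtype.ext ?_⟩
      invFun := fun k => ⟨α * k, orderOf_eq_prime_iff.2 ⟨?_, ne_one ?_⟩, ?_⟩
      left_inv := fun x => by ext; simp
      right_inv := fun k => by ext; simp }
  · rw [MulAut.conjNormal_apply, Subgroup.coe_inv]
    refine (mul_sq_eq_one_iff_conj_eq_inv hα).1 ?_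
    rw [mul_inv_cancel_left]
    exact (orderOf_eq_prime_iff.1 x.2.1).1
  · exact (mul_sq_eq_one_iff_conj_eq_inv hα).2 (by simpa using congrArg Subtype.val k.2)
  all_goals simp

theorem MulEquiv.card_apply_eq_inv_congr {H H' : Type*} [Group H] [Group H'] (e : H ≃* H')
    (φ : H ≃* H) :
    Nat.card {h // φ h = h⁻¹} = Nat.card {h' // e.symm.trans (φ.trans e) h' = h'⁻¹} :=
  Nat.card_congr <| e.toEquiv.subtypeEquiv fun h => by simp [← map_inv, e.injective.eq_iff]

local notation "SL(2,3)" => Matrix.SpecialLinearGroup (Fin 2) (ZMod 3)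

namespace SL23

/-- For `u = upper`, `v = lower` this is a normal form: `uv` and `vu` generate the quaternion
subgroup `Q₈ ⊴ SL(2,3)`, and `u` generates a complement of it. -/
def word {M : Type*} [Monoid M] (u v : M) (t : Fin 4 × Fin 2 × Fin 3) : M :=
  (u * v) ^ (t.1 : ℕ) * (v * u) ^ (t.2.1 : ℕ) * u ^ (t.2.2 : ℕ)

theorem map_word {M N F : Type*} [Monoid M] [Monoid N] [FunLike F M N] [MonoidHomClass F M N]
    (f : F) (u v : M) (t : Fin 4 × Fin 2 × Fin 3) : f (word u v t) = word (f u) (f v) t := by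
  simp only [word, map_mul, map_pow]

def upper : SL(2,3) := ⟨!![1, 1; 0, 1], by decide⟩

def lower : SL(2,3) := ⟨!![1, 0; 1, 1], by decide⟩

theorem word_upper_lower_surjective : Function.Surjective (word upper lower) := by
  decide

/-- The hypotheses are relations of `upper` and `lower`, hence hold for their images under any
endomorphism. -/
theorem card_word_eq_inv_le (u v : SL(2,3)) (hu : u ^ 3 = 1) (hv : v ^ 3 = 1)
    (huv : (u * v) ^ 4 = 1) : #{t | word u v t = (word upper lower t)⁻¹} ≤ 12 := by
  revert u v
  decide

theorem card_apply_eq_inv_le {F : Type*} [FunLike F SL(2,3) SL(2,3)]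
    [MonoidHomClass F SL(2,3) SL(2,3)] (f : F) : Nat.card {s // f s = s⁻¹} ≤ 12 := by
  have pow_map_eq_one (n : ℕ) (g : SL(2,3)) (hg : g ^ n = 1) : f g ^ n = 1 := by
    rw [← map_pow, hg, map_one]
  rw [Nat.card_eq_fintype_card, Fintype.card_subtype]
  calc #{s | f s = s⁻¹}
      ≤ #{t | f (word upper lower t) = (word upper lower t)⁻¹} := by
        refine card_le_card_of_surjOn (word upper lower) fun s hs => ?_
        obtain ⟨t, rfl⟩ := word_upper_lower_surjective s
        exact ⟨t, by simpa using hs, rfl⟩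
    _ = #{t | word (f upper) (f lower) t = (word upper lower t)⁻¹} := by
        simp only [map_word]
    _ ≤ 12 := card_word_eq_inv_le _ _ (pow_map_eq_one 3 _ (by decide))
        (pow_map_eq_one 3 _ (by decide)) (by rw [← map_mul]; exact pow_map_eq_one 4 _ (by decide))

end SL23

theorem stmt4_general (G : Type*) [Group G]
    (K : Subgroup G) (hKnormal : K.Normal)
    (hK : Nonempty (K ≃* Matrix.SpecialLinearGroup (Fin 2) (ZMod 3)))
    (α : G) (hαK : α ∉ K) (hα2 : orderOf α = 2) :
    Nat.card {x : G | orderOf x = 2 ∧ α⁻¹ * x ∈ K} ≤ 12 := by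
  obtain ⟨e⟩ := hK
  have hα : α ^ 2 = 1 := hα2 ▸ pow_orderOf_eq_one α
  calc Nat.card {x : G | orderOf x = 2 ∧ α⁻¹ * x ∈ K}
      = Nat.card {k : K // MulAut.conjNormal α k = k⁻¹} :=
        Subgroup.card_orderOf_eq_two_coset hα hαK
    _ = _ := e.card_apply_eq_inv_congr (MulAut.conjNormal α)
    _ ≤ 12 := SL23.card_apply_eq_inv_le _

/-- Let `G` be a finite group and `K` a normal subgroup of `G` isomorphic to
`SL(2,3)`, the group of `2×2` matrices of determinant `1` over the field with `3` elements.
If `α ∈ G \ K` has order `2`, then the number of elements of order `2` in the coset `αK` is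
at most `12`. -/
theorem stmt4 (G : Type*) [Group G] [Fintype G]
    (K : Subgroup G) (hKnormal : K.Normal)
    (hK : Nonempty (K ≃* Matrix.SpecialLinearGroup (Fin 2) (ZMod 3)))
    (α : G) (hαK : α ∉ K) (hα2 : orderOf α = 2) :
    Nat.card {x : G | orderOf x = 2 ∧ α⁻¹ * x ∈ K} ≤ 12 :=
  stmt4_general G K hKnormal hK α hαK hα2
end

section
/- Let s be a prime and E an extraspecial s-group of order s^{2n+1}. Let K be an algebraically closed field whose characteristic is not equal to s, let V be a finite-dimensional K-vector space, and let ρ : E → GL(V) be a faithful irreducible representation of E on V. If g ∈ E \ Z(E) is an element of order s, then the fixed-point subspace C_V(g) = {v ∈ V : ρ(g)v = v} satisfies dim_K C_V(g) = (1/s)·dim_K V. -/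
/-- Let `s` be a prime and `E` an extraspecial `s`-group of order `s^(2n+1)`
(its center has order `s`, its commutator subgroup equals its center, and the quotient by the
center is elementary abelian).  Let `K` be an algebraically closed field of characteristic
different from `s`, `V` a finite-dimensional `K`-vector space, and `ρ` a faithful irreducible
representation of `E` on `V`.  If `g ∈ E \ Z(E)` has order `s`, then the fixed-point subspace
`C_V(g)` satisfies `dim_K C_V(g) = (1/s)·dim_K V`, i.e. `s * dim_K C_V(g) = dim_K V`. -/
theorem stmt6 (s n : ℕ) (hs : s.Prime)
    (E : Type*) [Group E] [Fintype E]
    (hcardE : Fintype.card E = s ^ (2 * n + 1))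
    (hcenter : Nat.card (Subgroup.center E) = s)
    (hcomm : commutator E = Subgroup.center E)
    (helem : ∀ x : E, x ^ s ∈ Subgroup.center E)
    (K : Type*) [Field K] [IsAlgClosed K] (hchar : ringChar K ≠ s)
    (V : Type*) [AddCommGroup V] [Module K V] [FiniteDimensional K V]
    (ρ : Representation K E V)
    (hfaith : Function.Injective ρ)
    (hirr : ∀ W : Submodule K V, (∀ g : E, ∀ v ∈ W, ρ g v ∈ W) → W = ⊥ ∨ W = ⊤)
    (g : E) (hg : g ∉ Subgroup.center E) (hgs : orderOf g = s) :
    s * Module.finrank K (LinearMap.ker (ρ g - LinearMap.id)) = Module.finrank K V := by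
  classical
  haveI : NeZero s := ⟨hs.pos.ne'⟩
  -- `V` is nontrivial
  have hg1 : g ≠ 1 := fun h => hg (h ▸ Subgroup.one_mem _)
  haveI hVnt : Nontrivial V := by
    by_contra hV
    rw [not_nontrivial_iff_subsingleton] at hV
    exact hg1 (hfaith (LinearMap.ext fun v => Subsingleton.elim _ _))
  -- a noncommuting element `h`
  obtain ⟨h, hh⟩ : ∃ h : E, h * g ≠ g * h := by
    by_contra hc
    push_neg at hc
    exact hg (Subgroup.mem_center_iff.mpr hc)
  obtain ⟨z, hzdef⟩ : ∃ z : E, z = h * g * h⁻¹ * g⁻¹ := ⟨_, rfl⟩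
  have hz1 : z ≠ 1 := by
    intro hz
    apply hh
    have h2 : h * g * h⁻¹ * g⁻¹ = 1 := hzdef ▸ hz
    have h3 : h * g * h⁻¹ = g := mul_inv_eq_one.mp h2
    exact mul_inv_eq_iff_eq_mul.mp h3
  have hzc : z ∈ Subgroup.center E := by
    rw [hzdef, ← commutatorElement_def, ← hcomm]
    exact Subgroup.commutator_mem_commutator (Subgroup.mem_top h) (Subgroup.mem_top g)
  have hzs : z ^ s = 1 := by
    have hd := orderOf_dvd_natCard (⟨z, hzc⟩ : Subgroup.center E)
    rw [hcenter] at hd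
    have : (⟨z, hzc⟩ : Subgroup.center E) ^ s = 1 := orderOf_dvd_iff_pow_eq_one.mp hd
    simpa [Subtype.ext_iff] using this
  -- relation `h * g = g * z * h`
  have hrel : h * g = g * z * h := by
    have hcomm' : z * g = g * z := (Subgroup.mem_center_iff.mp hzc g).symm
    have h4 : z * g * h = h * g := by
      rw [hzdef]; simp [mul_assoc]
    rw [← h4, hcomm']
  -- Schur: `ρ z` is multiplication by a scalar `ω`
  obtain ⟨ω, hω⟩ := Module.End.exists_eigenvalue (ρ z : Module.End K V)
  have hωeig : ∀ v : V, ρ z v = ω • v := by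
    have hW : ∀ e : E, ∀ v ∈ Module.End.eigenspace (ρ z : Module.End K V) ω,
        ρ e v ∈ Module.End.eigenspace (ρ z : Module.End K V) ω := by
      intro e v hv
      rw [Module.End.mem_eigenspace_iff] at hv ⊢
      have hez : z * e = e * z := (Subgroup.mem_center_iff.mp hzc e).symm
      calc (ρ z) (ρ e v) = ρ (z * e) v := by rw [map_mul, Module.End.mul_apply]
        _ = ρ e (ρ z v) := by rw [hez, map_mul, Module.End.mul_apply]
        _ = ω • ρ e v := by rw [hv, map_smul]
    rcases hirr _ hW with hbot | htop
    · exact absurd hbot hω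
    · intro v
      have : v ∈ Module.End.eigenspace (ρ z : Module.End K V) ω := htop ▸ Submodule.mem_top
      exact Module.End.mem_eigenspace_iff.mp this
  have hωpow : ∀ m : ℕ, ∀ v : V, ρ (z ^ m) v = ω ^ m • v := by
    intro m
    induction m with
    | zero => intro v; simp
    | succ m ih =>
      intro v
      rw [pow_succ, map_mul]
      calc (ρ (z ^ m) * ρ z) v = ρ (z ^ m) (ρ z v) := Module.End.mul_apply _ _ _
        _ = ρ (z ^ m) (ω • v) := by rw [hωeig]
        _ = ω • ω ^ m • v := by rw [map_smul, ih]
        _ = ω ^ (m + 1) • v := by rw [smul_smul, ← pow_succ']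
  have hω1 : ω ≠ 1 := by
    intro hω1
    apply hz1
    apply hfaith
    refine LinearMap.ext fun v => ?_
    simp [hωeig v, hω1]
  obtain ⟨v₀, hv₀⟩ := exists_ne (0 : V)
  have hωs : ω ^ s = 1 := by
    have h1 : ρ (z ^ s) v₀ = v₀ := by simp [hzs]
    have h2 : ρ (z ^ s) v₀ = ω ^ s • v₀ := hωpow s v₀
    have h3 : (ω ^ s - 1) • v₀ = 0 := by rw [sub_smul, one_smul, ← h2, h1, sub_self]
    rcases smul_eq_zero.mp h3 with h' | h'
    · exact sub_eq_zero.mp h'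
    · exact absurd h' hv₀
  have hωord : orderOf ω = s := by
    have hdvd : orderOf ω ∣ s := orderOf_dvd_iff_pow_eq_one.mpr hωs
    rcases (Nat.Prime.eq_one_or_self_of_dvd hs _ hdvd) with h1 | h1
    · exact absurd (orderOf_eq_one_iff.mp h1) hω1
    · exact h1
  have hωprim : IsPrimitiveRoot ω s := hωord ▸ IsPrimitiveRoot.orderOf ω
  have hω0 : ω ≠ 0 := fun h0 => by simp [h0, zero_pow hs.pos.ne'] at hωs
  -- the endomorphism `f = ρ g`
  set f : Module.End K V := ρ g with hfdef
  have hfs : f ^ s = 1 := by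
    rw [hfdef, ← map_pow, ← hgs, pow_orderOf_eq_one, map_one]
  -- `f` is semisimple
  have hcharK : (s : K) ≠ 0 := by
    intro h0
    have hd : ringChar K ∣ s := (ringChar.spec K s).mp h0
    rcases hs.eq_one_or_self_of_dvd _ hd with h1 | h1
    · exact CharP.ringChar_ne_one h1
    · exact hchar h1
  have hsq : Squarefree (Polynomial.X ^ s - 1 : Polynomial K) := by
    have := Polynomial.separable_X_pow_sub_C (F := K) 1 hcharK one_ne_zero
    rw [Polynomial.C_1] at this
    exact this.squarefree
  have hss : f.IsSemisimple := by
    apply Module.End.isSemisimple_of_squarefree_aeval_eq_zero hsq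
    rw [map_sub, map_one, Polynomial.aeval_X_pow, hfs, sub_self]
  have htop : ⨆ μ : K, f.eigenspace μ = ⊤ := by
    have := Module.End.iSup_maxGenEigenspace_eq_top f
    simpa [hss.isFinitelySemisimple.maxGenEigenspace_eq_eigenspace] using this
  -- nonzero eigenspaces correspond to powers of ω
  have heigval : ∀ μ : K, f.eigenspace μ ≠ ⊥ → ∃ i < s, ω ^ i = μ := by
    intro μ hμ
    have hev : f.HasEigenvalue μ := hμ
    obtain ⟨v, hv⟩ := hev.exists_hasEigenvector
    have hμs : μ ^ s = 1 := by
      have h1 : (f ^ s) v = μ ^ s • v := hv.pow_apply s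
      rw [hfs] at h1
      have h3 : (μ ^ s - 1) • v = 0 := by
        rw [sub_smul, one_smul, ← h1, Module.End.one_apply, sub_self]
      rcases smul_eq_zero.mp h3 with h' | h'
      · exact sub_eq_zero.mp h'
      · exact absurd h' hv.right
    exact hωprim.eq_pow_of_pow_eq_one hμs
  have htop' : ⨆ k : Fin s, f.eigenspace (ω ^ (k : ℕ)) = ⊤ := by
    refine le_antisymm le_top ?_
    rw [← htop]
    refine iSup_le fun μ => ?_
    by_cases hμ : f.eigenspace μ = ⊥
    · rw [hμ]; exact bot_le
    · obtain ⟨i, hi, rfl⟩ := heigval μ hμ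
      exact le_iSup_of_le ⟨i, hi⟩ le_rfl
  have hinj : Function.Injective fun k : Fin s => ω ^ (k : ℕ) := by
    intro i j hij
    have := pow_injOn_Iio_orderOf (x := ω) (by rw [hωord]; exact i.isLt)
      (by rw [hωord]; exact j.isLt) hij
    exact Fin.ext this
  have hind : iSupIndep fun k : Fin s => f.eigenspace (ω ^ (k : ℕ)) :=
    (Module.End.eigenspaces_iSupIndep f).comp hinj
  have hInt := DirectSum.isInternal_submodule_of_iSupIndep_of_iSup_eq_top hind htop'
  -- dimension count
  have hdim : Module.finrank K V
      = ∑ k : Fin s, Module.finrank K (f.eigenspace (ω ^ (k : ℕ))) := by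
    have e := LinearEquiv.ofBijective (DirectSum.coeLinearMap
      (fun k : Fin s => f.eigenspace (ω ^ (k : ℕ)))) hInt
    rw [← e.finrank_eq, Module.finrank_directSum]
  -- the map `ρ h` lowers the eigenvalue exponent by one, injectively
  have hstep : ∀ k : ℕ,
      Module.finrank K (f.eigenspace (ω ^ (k + 1))) ≤ Module.finrank K (f.eigenspace (ω ^ k)) := by
    intro k
    have hmap : Submodule.map (ρ h) (f.eigenspace (ω ^ (k + 1))) ≤ f.eigenspace (ω ^ k) := by
      rintro w hw
      obtain ⟨v, hv, rfl⟩ := Submodule.mem_map.mp hw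
      have hv' : f v = ω ^ (k + 1) • v := Module.End.mem_eigenspace_iff.mp hv
      rw [Module.End.mem_eigenspace_iff]
      have key : ρ h (f v) = ω • f (ρ h v) := by
        calc ρ h (f v) = ρ (h * g) v := by rw [map_mul, Module.End.mul_apply]
          _ = ρ (g * z * h) v := by rw [hrel]
          _ = ρ g (ρ z (ρ h v)) := by
              rw [map_mul, map_mul, Module.End.mul_apply, Module.End.mul_apply]
          _ = ρ g (ω • ρ h v) := by rw [hωeig]
          _ = ω • f (ρ h v) := map_smul _ _ _
      rw [hv', map_smul] at key
      -- key : ω ^ (k+1) • ρ h v = ω • f (ρ h v)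
      have h5 : ω • f (ρ h v) = ω • (ω ^ k • ρ h v) := by
        rw [← key, smul_smul, ← pow_succ']
      exact smul_right_injective V hω0 h5
    have hinjh : Function.Injective (ρ h) := by
      intro a b hab
      have h6 : ρ h⁻¹ (ρ h a) = ρ h⁻¹ (ρ h b) := by rw [hab]
      rw [← Module.End.mul_apply, ← Module.End.mul_apply, ← map_mul, inv_mul_cancel,
        map_one, Module.End.one_apply, Module.End.one_apply] at h6
      exact h6
    calc Module.finrank K (f.eigenspace (ω ^ (k + 1)))
        = Module.finrank K (Submodule.map (ρ h) (f.eigenspace (ω ^ (k + 1)))) :=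
          (Submodule.equivMapOfInjective _ hinjh _).finrank_eq
      _ ≤ Module.finrank K (f.eigenspace (ω ^ k)) := Submodule.finrank_mono hmap
  have hanti : ∀ b a : ℕ, a ≤ b →
      Module.finrank K (f.eigenspace (ω ^ b)) ≤ Module.finrank K (f.eigenspace (ω ^ a)) := by
    intro b
    induction b with
    | zero => intro a hab; rw [Nat.le_zero.mp hab]
    | succ m ih =>
      intro a hab
      rcases Nat.eq_or_lt_of_le hab with rfl | h1
      · exact le_rfl
      · exact (hstep m).trans (ih a (Nat.lt_succ_iff.mp h1))
  have hconst : ∀ k : Fin s,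
      Module.finrank K (f.eigenspace (ω ^ (k : ℕ))) = Module.finrank K (f.eigenspace (ω ^ 0)) := by
    intro k
    refine le_antisymm (hanti k 0 (Nat.zero_le _)) ?_
    have h1 : Module.finrank K (f.eigenspace (ω ^ s))
        ≤ Module.finrank K (f.eigenspace (ω ^ (k : ℕ))) := hanti s k k.isLt.le
    rwa [hωs, ← pow_zero ω] at h1
  -- identify the fixed space with the eigenspace of 1
  have hker : LinearMap.ker (ρ g - LinearMap.id) = f.eigenspace (ω ^ 0) := by
    ext v
    rw [pow_zero, Module.End.mem_eigenspace_iff, LinearMap.mem_ker, LinearMap.sub_apply,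
      LinearMap.id_apply, one_smul, sub_eq_zero]
  rw [hker, hdim, Finset.sum_congr rfl (fun k _ => hconst k), Finset.sum_const,
    Finset.card_univ, Fintype.card_fin, smul_eq_mul]
end
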